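/- arXiv:2012.05204 — 2 statements merged into one kernel-verified Lean document; each statement's English description precedes it below -/
import Mathlib

section
/- For dyadic rationals x < y in (0,1) and a W-continuous solution v of the dyadic self-similarity equation with operators A₀, A₁ of joint spectral radius ρ < 1, one has ‖v(y) − v(x)‖ ≤ C · |y ⊖ x|^{−log₂(ρ + ε)} for every ε > 0 with ρ + ε < 1 and a constant C depending only on A₀, A₁, ε. -/
/-- The `n`-th binary digit of a nonnegative real `x` (digit of weight `2^n`). -/
noncomputable def rbit (x : ℝ) (n : ℤ) : ℕ := ⌊x / (2 : ℝ) ^ n⌋.toNat % 2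

/-- Dyadic (carry-free, digitwise XOR) addition on the dyadic half-line `ℝ₊`;
since `⊕` is an involution it coincides with dyadic subtraction `⊖`. -/
noncomputable def dAdd (x y : ℝ) : ℝ :=
  ∑' n : ℤ, (((rbit x n) ^^^ (rbit y n) : ℕ) : ℝ) * (2 : ℝ) ^ n

/-- The product of operators along a word of `Bool`s
(`false` choosing `A₀`, `true` choosing `A₁`). -/
noncomputable def wordProd {E : Type*} [NormedAddCommGroup E] [NormedSpace ℝ E]
    (A₀ A₁ : E →L[ℝ] E) (w : List Bool) : E →L[ℝ] E :=
  w.foldr (fun b acc => (cond b A₁ A₀).comp acc) (ContinuousLinearMap.id ℝ E)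

/-- The joint spectral radius of two operators,
`ρ = lim_{r→∞} max_{(d₁,…,d_r)} ‖A_{d₁} ⋯ A_{d_r}‖^{1/r}`; by Fekete's lemma
this limit equals the infimum over `r`. -/
noncomputable def jsr {E : Type*} [NormedAddCommGroup E] [NormedSpace ℝ E]
    (A₀ A₁ : E →L[ℝ] E) : ℝ :=
  ⨅ r : ℕ, ⨆ w : Fin (r + 1) → Bool,
    ‖wordProd A₀ A₁ (List.ofFn w)‖ ^ (((r : ℝ) + 1)⁻¹)

/-- The joint spectral radius of two affine operators: the joint spectral
radius of their linear parts. -/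
noncomputable def jsrAff {N : ℕ}
    (A₀ A₁ : (Fin N → ℝ) →ᵃ[ℝ] (Fin N → ℝ)) : ℝ :=
  jsr (LinearMap.toContinuousLinearMap A₀.linear)
    (LinearMap.toContinuousLinearMap A₁.linear)

/-- The dyadic self-similarity equation for `v : [0,1] → ℝ^N`:
`v(t) = A₀ v(2t)` on `[0, 1/2)` and `v(t) = A₁ v(2t ⊖ 1)` on `[1/2, 1]`. -/
def SelfSim {N : ℕ} (A₀ A₁ : (Fin N → ℝ) →ᵃ[ℝ] (Fin N → ℝ))
    (v : ℝ → (Fin N → ℝ)) : Prop :=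
  (∀ t : ℝ, 0 ≤ t → t < 1 / 2 → v t = A₀ (v (2 * t))) ∧
  (∀ t : ℝ, 1 / 2 ≤ t → t ≤ 1 → v t = A₁ (v (dAdd (2 * t) 1)))

/-- `W`-continuity (dyadic continuity) of a vector-valued function on `[0,1]`. -/
def WContV {N : ℕ} (v : ℝ → (Fin N → ℝ)) : Prop :=
  ∀ x : ℝ, 0 ≤ x → x ≤ 1 → ∀ ε : ℝ, 0 < ε → ∃ δ : ℝ, 0 < δ ∧
    ∀ h : ℝ, 0 ≤ h → h < δ → dAdd x h ≤ 1 → ‖v (dAdd x h) - v x‖ < ε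

/-- `v` has dyadic Hölder regularity of exponent `α` on `[0,1]`: its dyadic
modulus of continuity satisfies `w(v, δ) ≤ C δ^α`. -/
def DyadicHolderWith {N : ℕ} (v : ℝ → (Fin N → ℝ)) (α : ℝ) : Prop :=
  ∃ C : ℝ, ∀ x : ℝ, 0 ≤ x → x ≤ 1 → ∀ y : ℝ, 0 ≤ y → dAdd x y ≤ 1 →
    ‖v (dAdd x y) - v x‖ ≤ C * y ^ α

/-- A real number is dyadic rational. -/
def DyadicRat (x : ℝ) : Prop := ∃ a b : ℕ, x = (a : ℝ) / 2 ^ b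

/-!
On dyadic points the self-similarity equation makes `v` an iterated affine map: writing
`a = d 2^b + a'` with `a' < 2^b`, it reads `v (a / 2^(b+1)) = A_d (v (a' / 2^b))`.
Two points `p / 2^b`, `q / 2^b` whose numerators share their top `b - m` binary digits
(`q ^^^ p < 2^m`) are therefore images of two dyadic points under one affine word of length
`b - m`, and their difference under `v` is the linear part of that word applied to a bounded
vector. Since `ρ + ε` exceeds the joint spectral radius, every product of `n` linear parts has
norm at most `K (ρ + ε)^n`; the same bound, summed as a geometric series, shows that `v` is
bounded on dyadic points. Finally the dyadic distance `(q ^^^ p) / 2^b` is at least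
`2^(m - 1 - b)`, which turns `(ρ + ε)^(b - m)` into a multiple of `|y ⊖ x|^(-log₂ (ρ + ε))`.
-/

open Finset

theorem Nat.sum_range_div_two_pow_mod_two_mul (e M : ℕ) :
    ∑ m ∈ range M, e / 2 ^ m % 2 * 2 ^ m = e % 2 ^ M := by
  induction M with
  | zero => simp [Nat.mod_one]
  | succ M ih => rw [sum_range_succ, ih, Nat.mod_pow_succ, mul_comm]

theorem Nat.two_pow_add_xor_two_pow {a b : ℕ} (ha : a < 2 ^ b) : (2 ^ b + a) ^^^ 2 ^ b = a := by
  rw [← mul_one (2 ^ b), Nat.two_pow_add_eq_or_of_lt ha]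
  apply Nat.eq_of_testBit_eq
  intro i
  rcases eq_or_ne b i with rfl | hi
  · simp [Nat.testBit_lt_two_pow ha]
  · simp [hi]

theorem rbit_natCast_div_two_pow (a b : ℕ) (n : ℤ) :
    rbit ((a : ℝ) / 2 ^ b) n = if 0 ≤ n + b then a / 2 ^ (n + b).toNat % 2 else 0 := by
  unfold rbit
  rw [Int.floor_toNat, div_div, ← zpow_natCast, ← zpow_add₀ two_ne_zero]
  split_ifs with h
  · obtain ⟨k, hk⟩ : ∃ k : ℕ, (b : ℤ) + n = k := ⟨(n + b).toNat, by omega⟩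
    rw [hk, zpow_natCast, ← Nat.cast_ofNat, ← Nat.cast_pow, Nat.floor_div_eq_div,
      show (n + b).toNat = k by omega]
  · obtain ⟨k, hk⟩ : ∃ k : ℕ, (b : ℤ) + n = -(k + 1 : ℕ) := ⟨(-(n + b) - 1).toNat, by omega⟩
    rw [hk, zpow_neg, div_inv_eq_mul, zpow_natCast, ← Nat.cast_ofNat, ← Nat.cast_pow,
      ← Nat.cast_mul, Nat.floor_natCast, pow_succ]
    simp [← mul_assoc]

theorem tsum_rbit_mul_zpow (e b : ℕ) :
    ∑' n : ℤ, (rbit ((e : ℝ) / 2 ^ b) n : ℝ) * 2 ^ n = e / 2 ^ b := by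
  have hg : Function.Injective (fun k : ℕ => (k : ℤ) - b) := fun x y h => by simpa using h
  rw [← hg.tsum_eq]
  · have hterm (k : ℕ) : (rbit ((e : ℝ) / 2 ^ b) ((k : ℤ) - b) : ℝ) * 2 ^ ((k : ℤ) - b) =
        ((e / 2 ^ k % 2 * 2 ^ k : ℕ) : ℝ) / 2 ^ b := by
      rw [rbit_natCast_div_two_pow, if_pos (by omega), zpow_sub₀ two_ne_zero]
      simp [mul_div_assoc]
    simp_rw [hterm]
    rw [tsum_eq_sum (s := range e.size), ← sum_div, ← Nat.cast_sum,
      Nat.sum_range_div_two_pow_mod_two_mul, Nat.mod_eq_of_lt e.lt_size_self]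
    intro k hk
    rw [Nat.div_eq_of_lt ((Nat.lt_size_self e).trans_le
      (Nat.pow_le_pow_right two_pos (by simpa using hk)))]
    simp
  · intro n hn
    rw [Function.mem_support, rbit_natCast_div_two_pow] at hn
    split_ifs at hn with h
    · exact ⟨(n + b).toNat, by simp; omega⟩
    · simp at hn

theorem dAdd_natCast_div_two_pow (a c b : ℕ) :
    dAdd (a / 2 ^ b) (c / 2 ^ b) = ((a ^^^ c : ℕ) : ℝ) / 2 ^ b := by
  have hbits (n : ℤ) : rbit ((a : ℝ) / 2 ^ b) n ^^^ rbit ((c : ℝ) / 2 ^ b) n =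
      rbit (((a ^^^ c : ℕ) : ℝ) / 2 ^ b) n := by
    simp only [rbit_natCast_div_two_pow]
    split_ifs
    · rw [Nat.xor_div_two_pow, ← pow_one 2, Nat.xor_mod_two_pow]
    · rfl
  simp only [dAdd, hbits, tsum_rbit_mul_zpow]

section Words

variable {E : Type*} [NormedAddCommGroup E] [NormedSpace ℝ E]

theorem wordProd_cons (A₀ A₁ : E →L[ℝ] E) (d : Bool) (w : List Bool) :
    wordProd A₀ A₁ (d :: w) = (cond d A₁ A₀).comp (wordProd A₀ A₁ w) := rfl

theorem wordProd_append (A₀ A₁ : E →L[ℝ] E) (u w : List Bool) :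
    wordProd A₀ A₁ (u ++ w) = (wordProd A₀ A₁ u).comp (wordProd A₀ A₁ w) := by
  induction u with
  | nil => rfl
  | cons d u ih => rw [List.cons_append, wordProd_cons, wordProd_cons, ih,
      ContinuousLinearMap.comp_assoc]

theorem norm_wordProd_le_pow (A₀ A₁ : E →L[ℝ] E) (w : List Bool) :
    ‖wordProd A₀ A₁ w‖ ≤ max ‖A₀‖ ‖A₁‖ ^ w.length := by
  induction w with
  | nil => exact ContinuousLinearMap.norm_id_le
  | cons d w ih =>
    rw [wordProd_cons, List.length_cons, pow_succ']
    refine (ContinuousLinearMap.opNorm_comp_le _ _).trans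
      (mul_le_mul ?_ ih (norm_nonneg _) (by positivity))
    cases d
    exacts [le_max_left _ _, le_max_right _ _]

theorem norm_wordProd_le_of_forall_length_eq {A₀ A₁ : E →L[ℝ] E} {n : ℕ} {ρ B : ℝ}
    (hn : 0 < n) (hρ : 0 ≤ ρ)
    (hblock : ∀ w : List Bool, w.length = n → ‖wordProd A₀ A₁ w‖ ≤ ρ ^ n)
    (hshort : ∀ w : List Bool, w.length < n → ‖wordProd A₀ A₁ w‖ ≤ B) (w : List Bool) :
    ‖wordProd A₀ A₁ w‖ ≤ B * ρ ^ (n * (w.length / n)) := by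
  induction hw : w.length using Nat.strong_induction_on generalizing w with
  | _ k ih =>
  rcases lt_or_ge k n with hk | hk
  · simpa [Nat.div_eq_of_lt hk] using hshort w (hw ▸ hk)
  · rw [← w.take_append_drop n, wordProd_append]
    have hdrop : (w.drop n).length = k - n := by simp [hw]
    calc _ ≤ ‖wordProd A₀ A₁ (w.take n)‖ * ‖wordProd A₀ A₁ (w.drop n)‖ :=
          ContinuousLinearMap.opNorm_comp_le _ _
      _ ≤ ρ ^ n * (B * ρ ^ (n * ((k - n) / n))) :=
          mul_le_mul (hblock _ (by simp; omega)) (ih _ (by omega) _ hdrop) (norm_nonneg _)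
            (by positivity)
      _ = B * ρ ^ (n * (k / n)) := by
          rw [Nat.div_eq_sub_div hn hk, Nat.mul_add, pow_add]; ring

theorem jsr_nonneg (A₀ A₁ : E →L[ℝ] E) : 0 ≤ jsr A₀ A₁ :=
  le_ciInf fun _ => Real.iSup_nonneg fun _ => Real.rpow_nonneg (norm_nonneg _) _

theorem exists_norm_wordProd_le_pow_of_jsr_lt {A₀ A₁ : E →L[ℝ] E} {ρ : ℝ}
    (h : jsr A₀ A₁ < ρ) :
    ∃ n, 0 < n ∧ ∀ w : List Bool, w.length = n → ‖wordProd A₀ A₁ w‖ ≤ ρ ^ n := by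
  obtain ⟨r, hr⟩ := exists_lt_of_ciInf_lt h
  refine ⟨r + 1, r.succ_pos, fun w hw => ?_⟩
  obtain ⟨f, rfl⟩ : ∃ f : Fin (r + 1) → Bool, List.ofFn f = w :=
    ⟨fun i => w[(i : ℕ)], List.ext_getElem (by simp [hw]) fun _ _ _ => List.getElem_ofFn ..⟩
  have hf := ((le_ciSup (Set.finite_range _).bddAbove f).trans_lt hr).le
  rw [Real.rpow_inv_le_iff_of_pos (norm_nonneg _) (jsr_nonneg A₀ A₁ |>.trans h.le)
    (by positivity)] at hf
  exact_mod_cast hf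

theorem exists_norm_wordProd_le_mul_pow {A₀ A₁ : E →L[ℝ] E} {ρ : ℝ}
    (h : jsr A₀ A₁ < ρ) (hρ1 : ρ ≤ 1) :
    ∃ K, ∀ w : List Bool, ‖wordProd A₀ A₁ w‖ ≤ K * ρ ^ w.length := by
  have hρ0 : 0 < ρ := (jsr_nonneg A₀ A₁).trans_lt h
  obtain ⟨n, hn, hblock⟩ := exists_norm_wordProd_le_pow_of_jsr_lt h
  set B := max 1 (max ‖A₀‖ ‖A₁‖) ^ n
  have hshort (w : List Bool) (hw : w.length < n) : ‖wordProd A₀ A₁ w‖ ≤ B :=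
    (norm_wordProd_le_pow A₀ A₁ w).trans <| (pow_le_pow_left₀ (by positivity)
      (le_max_right _ _) _).trans (pow_le_pow_right₀ (le_max_left _ _) hw.le)
  refine ⟨B / ρ ^ (n - 1), fun w => ?_⟩
  refine (norm_wordProd_le_of_forall_length_eq hn hρ0.le hblock hshort w).trans ?_
  rw [div_mul_eq_mul_div, le_div_iff₀ (by positivity), mul_assoc, ← pow_add]
  refine mul_le_mul_of_nonneg_left (pow_le_pow_of_le_one hρ0.le hρ1 ?_) (by positivity)
  have := Nat.div_add_mod w.length n
  have := Nat.mod_lt w.length hn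
  omega

end Words

section AffineWords

variable {E : Type*} [NormedAddCommGroup E] [NormedSpace ℝ E]

def affineWordProd (A₀ A₁ : E →ᵃ[ℝ] E) (w : List Bool) : E →ᵃ[ℝ] E :=
  w.foldr (fun d f => (cond d A₁ A₀).comp f) (AffineMap.id ℝ E)

variable {A₀ A₁ : E →ᵃ[ℝ] E}

theorem affineWordProd_append (u w : List Bool) :
    affineWordProd A₀ A₁ (u ++ w) = (affineWordProd A₀ A₁ u).comp (affineWordProd A₀ A₁ w) := by
  induction u with
  | nil => rfl
  | cons d u ih => exact congrArg (cond d A₁ A₀).comp ih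

variable [FiniteDimensional ℝ E]

theorem affineWordProd_sub (w : List Bool) (x y : E) :
    affineWordProd A₀ A₁ w x - affineWordProd A₀ A₁ w y =
      wordProd (LinearMap.toContinuousLinearMap A₀.linear)
        (LinearMap.toContinuousLinearMap A₁.linear) w (x - y) := by
  induction w with
  | nil => rfl
  | cons d w ih =>
    change cond d A₁ A₀ (affineWordProd A₀ A₁ w x) - cond d A₁ A₀ (affineWordProd A₀ A₁ w y) = _
    rw [← vsub_eq_sub, ← AffineMap.linearMap_vsub, vsub_eq_sub, ih]
    cases d <;> rfl

theorem norm_affineWordProd_zero_le {K ρ : ℝ}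
    (hK : ∀ w : List Bool, ‖wordProd (LinearMap.toContinuousLinearMap A₀.linear)
      (LinearMap.toContinuousLinearMap A₁.linear) w‖ ≤ K * ρ ^ w.length) (w : List Bool) :
    ‖affineWordProd A₀ A₁ w 0‖ ≤ K * max ‖A₀ 0‖ ‖A₁ 0‖ * ∑ i ∈ range w.length, ρ ^ i := by
  induction w using List.reverseRecOn with
  | nil => simp [affineWordProd]
  | append_singleton w d ih =>
    have hsnoc : affineWordProd A₀ A₁ (w ++ [d]) 0 =
        wordProd (LinearMap.toContinuousLinearMap A₀.linear)
          (LinearMap.toContinuousLinearMap A₁.linear) w (cond d A₁ A₀ 0) +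
        affineWordProd A₀ A₁ w 0 := by
      rw [← sub_zero (cond d A₁ A₀ 0), ← affineWordProd_sub, sub_add_cancel,
        affineWordProd_append]
      rfl
    have hd : ‖cond d A₁ A₀ 0‖ ≤ max ‖A₀ 0‖ ‖A₁ 0‖ := by
      cases d
      exacts [le_max_left _ _, le_max_right _ _]
    rw [hsnoc, List.length_append, List.length_singleton, sum_range_succ]
    calc _ ≤ K * ρ ^ w.length * max ‖A₀ 0‖ ‖A₁ 0‖ +
          K * max ‖A₀ 0‖ ‖A₁ 0‖ * ∑ i ∈ range w.length, ρ ^ i :=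
          (norm_add_le _ _).trans (add_le_add
            ((ContinuousLinearMap.le_opNorm _ _).trans
              (mul_le_mul (hK w) hd (norm_nonneg _) ((norm_nonneg _).trans (hK w)))) ih)
      _ = _ := by ring

theorem norm_affineWordProd_le {K ρ : ℝ} (hρ0 : 0 ≤ ρ) (hρ1 : ρ < 1)
    (hK : ∀ w : List Bool, ‖wordProd (LinearMap.toContinuousLinearMap A₀.linear)
      (LinearMap.toContinuousLinearMap A₁.linear) w‖ ≤ K * ρ ^ w.length)
    (w : List Bool) (x : E) :
    ‖affineWordProd A₀ A₁ w x‖ ≤ K * ‖x‖ + K * max ‖A₀ 0‖ ‖A₁ 0‖ / (1 - ρ) := by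
  have hK0 : 0 ≤ K := by simpa using (norm_nonneg _).trans (hK [])
  have hlin : ‖affineWordProd A₀ A₁ w x - affineWordProd A₀ A₁ w 0‖ ≤ K * ‖x‖ := by
    rw [affineWordProd_sub, sub_zero]
    refine (ContinuousLinearMap.le_opNorm _ _).trans (mul_le_mul_of_nonneg_right ?_ (norm_nonneg _))
    exact (hK w).trans (mul_le_of_le_one_right hK0 (pow_le_one₀ hρ0 hρ1.le))
  have hgeom : ∑ i ∈ range w.length, ρ ^ i ≤ 1 / (1 - ρ) := by
    have := geom_sum_Ico_le_of_lt_one (m := 0) (n := w.length) hρ0 hρ1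
    rwa [← range_eq_Ico, pow_zero] at this
  calc _ ≤ ‖affineWordProd A₀ A₁ w x - affineWordProd A₀ A₁ w 0‖ + ‖affineWordProd A₀ A₁ w 0‖ :=
        norm_le_norm_sub_add _ _
    _ ≤ K * ‖x‖ + K * max ‖A₀ 0‖ ‖A₁ 0‖ * (1 / (1 - ρ)) :=
        add_le_add hlin ((norm_affineWordProd_zero_le hK w).trans
          (mul_le_mul_of_nonneg_left hgeom (by positivity)))
    _ = _ := by ring

end AffineWords

theorem Real.pow_le_rpow_neg_logb_two {ρ x : ℝ} (hρ0 : 0 < ρ) (hρ1 : ρ ≤ 1) {k : ℕ}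
    (hx : ((2 : ℝ) ^ k)⁻¹ ≤ x) : ρ ^ k ≤ x ^ (-Real.logb 2 ρ) := by
  have hρk : ρ ^ k = (((2 : ℝ) ^ k)⁻¹) ^ (-Real.logb 2 ρ) := by
    rw [Real.inv_rpow (by positivity), Real.rpow_neg (by positivity), inv_inv,
      ← Real.rpow_natCast 2 k, ← Real.rpow_mul zero_le_two, mul_comm, Real.rpow_mul zero_le_two,
      Real.rpow_logb two_pos (by norm_num) hρ0, Real.rpow_natCast]
  rw [hρk]
  exact Real.rpow_le_rpow (by positivity) hx
    (neg_nonneg.2 (Real.logb_nonpos one_lt_two hρ0.le hρ1))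

theorem DyadicRat.exists_common_denom {x y : ℝ} (hx : DyadicRat x) (hy : DyadicRat y) :
    ∃ p q b : ℕ, x = p / 2 ^ b ∧ y = q / 2 ^ b := by
  obtain ⟨p, b, rfl⟩ := hx
  obtain ⟨q, c, rfl⟩ := hy
  refine ⟨p * 2 ^ c, q * 2 ^ b, b + c, ?_, ?_⟩ <;> push_cast <;> field_simp <;> ring

namespace SelfSim

variable {N : ℕ} {A₀ A₁ : (Fin N → ℝ) →ᵃ[ℝ] (Fin N → ℝ)} {v : ℝ → (Fin N → ℝ)}

theorem apply_natCast_div_two_pow_succ (hv : SelfSim A₀ A₁ v) (d : Bool) {a b : ℕ}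
    (ha : a < 2 ^ b) :
    v (((d.toNat * 2 ^ b + a : ℕ) : ℝ) / 2 ^ (b + 1)) = cond d A₁ A₀ (v (a / 2 ^ b)) := by
  have ha' : (a : ℝ) < 2 ^ b := by exact_mod_cast ha
  have h2b : (0 : ℝ) < 2 ^ b := by positivity
  cases d
  · have hhalf : (a : ℝ) / 2 ^ (b + 1) < 1 / 2 := by
      rw [pow_succ, div_lt_div_iff₀ (by positivity) two_pos]; linarith
    simp only [Bool.toNat_false, zero_mul, zero_add, cond_false]
    rw [hv.1 _ (by positivity) hhalf, pow_succ]
    congr 2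
    field_simp
  · have h1 : (1 : ℝ) / 2 ≤ ((2 ^ b + a : ℕ) : ℝ) / 2 ^ (b + 1) := by
      rw [div_le_div_iff₀ two_pos (by positivity), pow_succ]; push_cast; linarith
    have h2 : ((2 ^ b + a : ℕ) : ℝ) / 2 ^ (b + 1) ≤ 1 := by
      rw [div_le_one (by positivity), pow_succ]; push_cast; linarith
    have hshift : dAdd (2 * (((2 ^ b + a : ℕ) : ℝ) / 2 ^ (b + 1))) 1 = a / 2 ^ b := by
      rw [show 2 * (((2 ^ b + a : ℕ) : ℝ) / 2 ^ (b + 1)) = ((2 ^ b + a : ℕ) : ℝ) / 2 ^ b by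
          rw [pow_succ]; field_simp,
        show (1 : ℝ) = ((2 ^ b : ℕ) : ℝ) / 2 ^ b by simp [h2b.ne'],
        dAdd_natCast_div_two_pow, Nat.two_pow_add_xor_two_pow ha]
    simp only [Bool.toNat_true, one_mul, cond_true]
    rw [hv.2 _ h1 h2, hshift]

theorem exists_affineWordProd (hv : SelfSim A₀ A₁ v) (m : ℕ) {j s : ℕ} (hs : s < 2 ^ j) :
    ∃ w : List Bool, w.length = j ∧ ∀ r < 2 ^ m,
      v (((s * 2 ^ m + r : ℕ) : ℝ) / 2 ^ (j + m)) = affineWordProd A₀ A₁ w (v (r / 2 ^ m)) := by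
  induction j generalizing s with
  | zero =>
    refine ⟨[], rfl, fun r _ => ?_⟩
    simp [show s = 0 by simpa using hs, affineWordProd]
  | succ j ih =>
    obtain ⟨d, s, hs', rfl⟩ : ∃ d : Bool, ∃ s' < 2 ^ j, s = d.toNat * 2 ^ j + s' := by
      rcases lt_or_ge s (2 ^ j) with h | h
      · exact ⟨false, s, h, by simp⟩
      · exact ⟨true, s - 2 ^ j, by rw [pow_succ] at hs; omega, by simp; omega⟩
    obtain ⟨w, hw, hvw⟩ := ih hs'
    refine ⟨d :: w, by simp [hw], fun r hr => ?_⟩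
    have har : s * 2 ^ m + r < 2 ^ (j + m) := by
      calc s * 2 ^ m + r < (s + 1) * 2 ^ m := by linarith
        _ ≤ 2 ^ j * 2 ^ m := Nat.mul_le_mul_right _ hs'
        _ = 2 ^ (j + m) := (pow_add 2 j m).symm
    have key := hv.apply_natCast_div_two_pow_succ d har
    rw [hvw r hr] at key
    rw [show (d.toNat * 2 ^ j + s) * 2 ^ m + r = d.toNat * 2 ^ (j + m) + (s * 2 ^ m + r) by ring,
      show j + 1 + m = j + m + 1 by ring]
    exact key

theorem norm_apply_le (hv : SelfSim A₀ A₁ v) {K ρ : ℝ} (hρ0 : 0 ≤ ρ) (hρ1 : ρ < 1)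
    (hK : ∀ w : List Bool, ‖wordProd (LinearMap.toContinuousLinearMap A₀.linear)
      (LinearMap.toContinuousLinearMap A₁.linear) w‖ ≤ K * ρ ^ w.length)
    {a b : ℕ} (ha : a < 2 ^ b) :
    ‖v (a / 2 ^ b)‖ ≤ K * ‖v 0‖ + K * max ‖A₀ 0‖ ‖A₁ 0‖ / (1 - ρ) := by
  obtain ⟨w, -, hw⟩ := hv.exists_affineWordProd 0 ha
  have hva := hw 0 one_pos
  simp only [pow_zero, mul_one, add_zero, Nat.cast_zero, zero_div] at hva
  rw [hva]
  exact norm_affineWordProd_le hρ0 hρ1 hK w (v 0)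

theorem norm_sub_le_of_xor_lt (hv : SelfSim A₀ A₁ v) {K ρ M : ℝ}
    (hK : ∀ w : List Bool, ‖wordProd (LinearMap.toContinuousLinearMap A₀.linear)
      (LinearMap.toContinuousLinearMap A₁.linear) w‖ ≤ K * ρ ^ w.length)
    (hM : ∀ a b : ℕ, a < 2 ^ b → ‖v (a / 2 ^ b)‖ ≤ M)
    {p q b m : ℕ} (hq : q < 2 ^ b) (hm : m ≤ b) (hpq : q ^^^ p < 2 ^ m) :
    ‖v (q / 2 ^ b) - v (p / 2 ^ b)‖ ≤ K * ρ ^ (b - m) * (2 * M) := by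
  have hdiv : p / 2 ^ m = q / 2 ^ m := by
    have := Nat.div_eq_of_lt hpq
    rw [Nat.xor_div_two_pow, xor_eq_zero_iff] at this
    exact this.symm
  have hs : q / 2 ^ m < 2 ^ (b - m) :=
    Nat.div_lt_of_lt_mul (by rwa [← pow_add, Nat.add_sub_cancel' hm])
  obtain ⟨w, hw, hvw⟩ := hv.exists_affineWordProd m hs
  have hrepr (a : ℕ) (ha : a / 2 ^ m = q / 2 ^ m) :
      v (a / 2 ^ b) = affineWordProd A₀ A₁ w (v ((a % 2 ^ m : ℕ) / 2 ^ m)) := by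
    rw [← hvw _ (Nat.mod_lt _ (by positivity)), ← ha, Nat.div_add_mod', Nat.sub_add_cancel hm]
  rw [hrepr q rfl, hrepr p hdiv, affineWordProd_sub]
  refine (ContinuousLinearMap.le_opNorm _ _).trans
    (mul_le_mul (hw ▸ hK w) ?_ (norm_nonneg _) ((norm_nonneg _).trans (hw ▸ hK w)))
  calc _ ≤ M + M := (norm_sub_le _ _).trans
        (add_le_add (hM _ _ (Nat.mod_lt _ (by positivity))) (hM _ _ (Nat.mod_lt _ (by positivity))))
    _ = 2 * M := (two_mul M).symm

theorem norm_sub_le_mul_rpow (hv : SelfSim A₀ A₁ v) {K ρ M : ℝ}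
    (hK : ∀ w : List Bool, ‖wordProd (LinearMap.toContinuousLinearMap A₀.linear)
      (LinearMap.toContinuousLinearMap A₁.linear) w‖ ≤ K * ρ ^ w.length)
    (hM : ∀ a b : ℕ, a < 2 ^ b → ‖v (a / 2 ^ b)‖ ≤ M) (hρ0 : 0 < ρ) (hρ1 : ρ ≤ 1)
    {p q b : ℕ} (hp : p < 2 ^ b) (hq : q < 2 ^ b) (hpq : p ≠ q) :
    ‖v (q / 2 ^ b) - v (p / 2 ^ b)‖ ≤
      2 * M * K / ρ * (((q ^^^ p : ℕ) : ℝ) / 2 ^ b) ^ (-Real.logb 2 ρ) := by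
  set m := (q ^^^ p).size
  have hm0 : 0 < m := Nat.size_pos.2 (Nat.pos_of_ne_zero (by simpa using hpq.symm))
  have hmb : m ≤ b := Nat.size_le.2 (Nat.xor_lt_two_pow hq hp)
  have hK0 : 0 ≤ K := by simpa using (norm_nonneg _).trans (hK [])
  have hM0 : 0 ≤ M := (norm_nonneg _).trans (hM 0 0 one_pos)
  have hdist : ((2 : ℝ) ^ (b + 1 - m))⁻¹ ≤ ((q ^^^ p : ℕ) : ℝ) / 2 ^ b := by
    have htop : 2 ^ (m - 1) ≤ q ^^^ p := Nat.lt_size.1 (Nat.sub_lt hm0 one_pos)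
    have hsplit : (2 : ℝ) ^ b = 2 ^ (m - 1) * 2 ^ (b + 1 - m) := by
      rw [← pow_add]; congr 1; omega
    rw [inv_eq_one_div, div_le_div_iff₀ (by positivity) (by positivity), one_mul, hsplit]
    gcongr
    exact_mod_cast htop
  calc _ ≤ K * ρ ^ (b - m) * (2 * M) := hv.norm_sub_le_of_xor_lt hK hM hq hmb (Nat.lt_size_self _)
    _ = 2 * M * K / ρ * ρ ^ (b + 1 - m) := by
        rw [show b + 1 - m = b - m + 1 by omega, pow_succ]; field_simp
    _ ≤ _ := mul_le_mul_of_nonneg_left (Real.pow_le_rpow_neg_logb_two hρ0 hρ1 hdist)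
        (by positivity)

end SelfSim

theorem fractal_curve_holder_estimate_general {N : ℕ}
    (A₀ A₁ : (Fin N → ℝ) →ᵃ[ℝ] (Fin N → ℝ))
    (v : ℝ → (Fin N → ℝ)) (hv : SelfSim A₀ A₁ v)
    (ε : ℝ) (hε : 0 < ε) (hρε : jsrAff A₀ A₁ + ε < 1) :
    ∃ C : ℝ, ∀ x y : ℝ, DyadicRat x → DyadicRat y →
      0 < x → x < y → y < 1 →
      ‖v y - v x‖ ≤ C * (dAdd y x) ^ (-Real.logb 2 (jsrAff A₀ A₁ + ε)) := by
  set ρ := jsrAff A₀ A₁ + ε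
  have hρ0 : 0 < ρ := add_pos_of_nonneg_of_pos (jsr_nonneg _ _) hε
  obtain ⟨K, hK⟩ := exists_norm_wordProd_le_mul_pow (lt_add_of_pos_right _ hε) hρε.le
  set M := K * ‖v 0‖ + K * max ‖A₀ 0‖ ‖A₁ 0‖ / (1 - ρ)
  have hM (a b : ℕ) (ha : a < 2 ^ b) : ‖v (a / 2 ^ b)‖ ≤ M := hv.norm_apply_le hρ0.le hρε hK ha
  refine ⟨2 * M * K / ρ, fun x y hx hy _ hxy hy1 => ?_⟩
  obtain ⟨p, q, b, rfl, rfl⟩ := hx.exists_common_denom hy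
  have h2b : (0 : ℝ) < 2 ^ b := by positivity
  have hpq : p < q := by exact_mod_cast (div_lt_div_iff_of_pos_right h2b).1 hxy
  have hq : q < 2 ^ b := by exact_mod_cast (div_lt_one h2b).1 hy1
  rw [dAdd_natCast_div_two_pow]
  exact hv.norm_sub_le_mul_rpow hK hM hρ0 hρε.le (hpq.trans hq) hq hpq.ne

/-- For dyadic rationals `x < y` in `(0,1)` and a `W`-continuous solution `v`
of the dyadic self-similarity equation with operators of joint spectral radius
`ρ < 1`, for every `ε > 0` with `ρ + ε < 1` there is a constant `C` with
`‖v(y) − v(x)‖ ≤ C |y ⊖ x|^{−log₂(ρ + ε)}`. -/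
theorem fractal_curve_holder_estimate {N : ℕ}
    (A₀ A₁ : (Fin N → ℝ) →ᵃ[ℝ] (Fin N → ℝ))
    (hρ : jsrAff A₀ A₁ < 1)
    (v : ℝ → (Fin N → ℝ)) (hv : SelfSim A₀ A₁ v) (hW : WContV v)
    (ε : ℝ) (hε : 0 < ε) (hρε : jsrAff A₀ A₁ + ε < 1) :
    ∃ C : ℝ, ∀ x y : ℝ, DyadicRat x → DyadicRat y →
      0 < x → x < y → y < 1 →
      ‖v y - v x‖ ≤ C * (dAdd y x) ^ (-Real.logb 2 (jsrAff A₀ A₁ + ε)) :=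
  fractal_curve_holder_estimate_general A₀ A₁ v hv ε hε hρε
end

section
/- Let A be a column-stochastic N×N matrix having at least one row all of whose entries are positive. Then there exists q ∈ (0,1) such that for all x, y in the unit simplex Δ = {x ∈ ℝ^N : x ≥ 0, Σᵢ xᵢ = 1}, one has ‖Ax − Ay‖₁ ≤ q ‖x − y‖₁. Moreover one may take q = 1 − m, where m > 0 is the minimal entry of the positive row. -/
/-!
Since `x - y` has coordinate sum zero, `A (x - y)` does not change when the constant `m` is
subtracted from every entry of the positive row `i₀`. The resulting matrix is still entrywise
nonnegative, with all column sums `1 - m`, and a nonnegative matrix with column sums `c` maps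
`ℓ¹`-balls of radius `r` into `ℓ¹`-balls of radius `c r`.
-/

open Matrix

lemma sum_abs_mulVec_le_of_sum_col_eq {ι κ : Type*} [Fintype ι] [Fintype κ]
    (B : Matrix ι κ ℝ) (hnn : ∀ i j, 0 ≤ B i j) {c : ℝ} (hcol : ∀ j, ∑ i, B i j = c)
    (z : κ → ℝ) :
    ∑ i, |(B *ᵥ z) i| ≤ c * ∑ j, |z j| :=
  calc ∑ i, |(B *ᵥ z) i| ≤ ∑ i, ∑ j, B i j * |z j| := by
        refine Finset.sum_le_sum fun i _ => (Finset.abs_sum_le_sum_abs _ _).trans_eq ?_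
        simp only [abs_mul, abs_of_nonneg (hnn i _)]
    _ = c * ∑ j, |z j| := by
        simp only [Finset.sum_comm (γ := ι), ← Finset.sum_mul, hcol, Finset.mul_sum]

lemma mulVec_sub_vecMulVec_one_of_sum_eq_zero {ι κ : Type*} [Fintype κ]
    (A : Matrix ι κ ℝ) (u : ι → ℝ) {z : κ → ℝ} (hz : ∑ j, z j = 0) :
    (A - vecMulVec u 1) *ᵥ z = A *ᵥ z := by
  rw [sub_mulVec, vecMulVec_mulVec, one_dotProduct, hz]
  simp

lemma sum_abs_mulVec_le_of_row_ge {ι κ : Type*} [Fintype ι] [DecidableEq ι] [Fintype κ]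
    (A : Matrix ι κ ℝ) (hnn : ∀ i j, 0 ≤ A i j) {c : ℝ} (hcol : ∀ j, ∑ i, A i j = c)
    (i₀ : ι) {m : ℝ} (hrow : ∀ j, m ≤ A i₀ j) {z : κ → ℝ} (hz : ∑ j, z j = 0) :
    ∑ i, |(A *ᵥ z) i| ≤ (c - m) * ∑ j, |z j| := by
  set B := A - vecMulVec (Pi.single i₀ m) 1
  have hB : ∀ i j, B i j = A i j - (Pi.single i₀ m : ι → ℝ) i := fun i j => by simp [B]
  rw [← mulVec_sub_vecMulVec_one_of_sum_eq_zero A (Pi.single i₀ m) hz]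
  refine sum_abs_mulVec_le_of_sum_col_eq B (fun i j => ?_) (fun j => ?_) z
  · rw [hB]
    rcases eq_or_ne i i₀ with rfl | hi
    · simpa using hrow j
    · simpa [hi] using hnn i j
  · simp [hB, Finset.sum_sub_distrib, hcol]

/-- A column-stochastic matrix with a strictly positive row contracts the
`ℓ¹`-distance on the unit simplex, with factor `q = 1 − m` where `m` is the
minimal entry of the positive row. -/
theorem stochastic_with_positive_row_contracts (N : ℕ)
    (A : Matrix (Fin N) (Fin N) ℝ)
    (hnn : ∀ i j, 0 ≤ A i j) (hcol : ∀ j, ∑ i, A i j = 1)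
    (i₀ : Fin N) (hrow : ∀ j, 0 < A i₀ j) :
    (∃ q : ℝ, 0 < q ∧ q < 1 ∧
      ∀ x y : Fin N → ℝ,
        (∀ i, 0 ≤ x i) → ∑ i, x i = 1 → (∀ i, 0 ≤ y i) → ∑ i, y i = 1 →
        ∑ i, |A.mulVec x i - A.mulVec y i| ≤ q * ∑ i, |x i - y i|) ∧
    (∀ x y : Fin N → ℝ,
      (∀ i, 0 ≤ x i) → ∑ i, x i = 1 → (∀ i, 0 ≤ y i) → ∑ i, y i = 1 →
      ∑ i, |A.mulVec x i - A.mulVec y i| ≤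
        (1 - Finset.univ.inf' ⟨i₀, Finset.mem_univ i₀⟩ (A i₀)) *
          ∑ i, |x i - y i|) := by
  set m := Finset.univ.inf' ⟨i₀, Finset.mem_univ i₀⟩ (A i₀)
  have hm_le : ∀ j, m ≤ A i₀ j := fun j => Finset.inf'_le _ (Finset.mem_univ j)
  have hm_pos : 0 < m := (Finset.lt_inf'_iff _).2 fun j _ => hrow j
  have hm_le_one : m ≤ 1 :=
    (hm_le i₀).trans <| hcol i₀ ▸ Finset.single_le_sum (fun i _ => hnn i i₀) (Finset.mem_univ i₀)
  have contract : ∀ x y : Fin N → ℝ, ∑ i, x i = 1 → ∑ i, y i = 1 →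
      ∑ i, |A.mulVec x i - A.mulVec y i| ≤ (1 - m) * ∑ i, |x i - y i| := by
    intro x y hx hy
    have hsum : ∑ j, (x - y) j = 0 := by simp [Finset.sum_sub_distrib, hx, hy]
    simpa [mulVec_sub] using sum_abs_mulVec_le_of_row_ge A hnn hcol i₀ hm_le hsum
  -- `1 - m` itself may be `0` (e.g. when `N = 1`), so halve the gain to keep `q` positive.
  refine ⟨⟨1 - m / 2, by linarith, by linarith, fun x y _ hx _ hy => ?_⟩,
    fun x y _ hx _ hy => contract x y hx hy⟩
  exact (contract x y hx hy).trans <|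
    mul_le_mul_of_nonneg_right (by linarith) (Finset.sum_nonneg fun i _ => abs_nonneg _)
end
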